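/- arXiv:2602.06468 — 6 statements merged into one kernel-verified Lean document; each statement's English description precedes it below -/
import Mathlib

section
/- The function W_a^* : ℝⁿ → ℝ given by W_a^*(x) = ∫₀^{|x|} max(r^n − a^n, 0)^{1/n} dr is convex on ℝⁿ, is nonnegative, and its zero set {x : W_a^*(x) = 0} equals the closed Euclidean ball of radius a centered at the origin. -/
open Set intervalIntegral

section aux
variable (n : ℕ) (a : ℝ)

noncomputable def gfun (r : ℝ) : ℝ := (max (r ^ n - a ^ n) 0) ^ ((1:ℝ)/n)

lemma gfun_cont : Continuous (gfun n a) := by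
  apply Continuous.rpow_const
  · exact (continuous_pow n |>.sub continuous_const).max continuous_const
  · intro x; right; positivity

lemma gfun_nonneg (r : ℝ) : 0 ≤ gfun n a r :=
  Real.rpow_nonneg (le_max_right _ _) _

lemma gfun_mono : MonotoneOn (gfun n a) (Ici 0) := by
  intro r hr s _ hrs
  apply Real.rpow_le_rpow (le_max_right _ _)
  · exact max_le_max (sub_le_sub_right (pow_le_pow_left₀ hr hrs n) _) le_rfl
  · positivity

noncomputable def ffun (t : ℝ) : ℝ := ∫ r in (0:ℝ)..t, gfun n a r

lemma ffun_hasDeriv (t : ℝ) : HasDerivAt (ffun n a) (gfun n a t) t :=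
  ((gfun_cont n a).integral_hasStrictDerivAt 0 t).hasDerivAt

lemma ffun_mono : MonotoneOn (ffun n a) (Ici 0) := by
  intro r hr s _ hrs
  have h1 : IntervalIntegrable (gfun n a) MeasureTheory.volume 0 r :=
    (gfun_cont n a).intervalIntegrable _ _
  have h2 : IntervalIntegrable (gfun n a) MeasureTheory.volume r s :=
    (gfun_cont n a).intervalIntegrable _ _
  have heq : ffun n a s = ffun n a r + ∫ x in r..s, gfun n a x := by
    rw [ffun, ffun, integral_add_adjacent_intervals h1 h2]
  have hnn : 0 ≤ ∫ x in r..s, gfun n a x :=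
    integral_nonneg hrs fun x _ => gfun_nonneg n a x
  linarith

lemma ffun_convex : ConvexOn ℝ (Ici 0) (ffun n a) := by
  have hdiff : Differentiable ℝ (ffun n a) := fun t => (ffun_hasDeriv n a t).differentiableAt
  have hderiv : ∀ t : ℝ, deriv (ffun n a) t = gfun n a t := fun t =>
    (ffun_hasDeriv n a t).deriv
  apply MonotoneOn.convexOn_of_deriv (convex_Ici 0) hdiff.continuous.continuousOn
    hdiff.differentiableOn
  intro r hr s hs hrs
  rw [hderiv, hderiv]
  rw [interior_Ici] at hr hs
  exact gfun_mono n a (Set.mem_Ici.mpr (le_of_lt (Set.mem_Ioi.mp hr))) (Set.mem_Ici.mpr (le_of_lt (Set.mem_Ioi.mp hs))) hrs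

end aux

/-- `W_a^*` is convex, nonnegative, and its zero set is the closed ball of radius `a`. -/
theorem stmt_3 (n : ℕ) (hn : 2 ≤ n) (a : ℝ) (ha : 0 < a) :
    ConvexOn ℝ Set.univ
      (fun x : EuclideanSpace ℝ (Fin n) =>
        ∫ r in (0:ℝ)..‖x‖, (max (r ^ n - a ^ n) 0) ^ ((1:ℝ)/n)) ∧
    (∀ x : EuclideanSpace ℝ (Fin n),
      0 ≤ ∫ r in (0:ℝ)..‖x‖, (max (r ^ n - a ^ n) 0) ^ ((1:ℝ)/n)) ∧
    {x : EuclideanSpace ℝ (Fin n) |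
        (∫ r in (0:ℝ)..‖x‖, (max (r ^ n - a ^ n) 0) ^ ((1:ℝ)/n)) = 0}
      = Metric.closedBall (0 : EuclideanSpace ℝ (Fin n)) a := by
  have hfun : ∀ x : EuclideanSpace ℝ (Fin n),
      (∫ r in (0:ℝ)..‖x‖, (max (r ^ n - a ^ n) 0) ^ ((1:ℝ)/n)) = ffun n a ‖x‖ :=
    fun x => rfl
  refine ⟨?_, ?_, ?_⟩
  · -- convexity
    have himg : (fun x : EuclideanSpace ℝ (Fin n) => ‖x‖) '' Set.univ ⊆ Ici 0 := by
      rintro t ⟨x, -, rfl⟩; exact norm_nonneg x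
    have hcomp : ConvexOn ℝ Set.univ
        ((ffun n a) ∘ (fun x : EuclideanSpace ℝ (Fin n) => ‖x‖)) := by
      refine ConvexOn.comp ((ffun_convex n a).subset himg ?_) ?_
        ((ffun_mono n a).mono himg)
      · -- convexity of image of norm
        have : (fun x : EuclideanSpace ℝ (Fin n) => ‖x‖) '' Set.univ = Ici 0 := by
          apply subset_antisymm himg
          intro t ht
          haveI : Nonempty (Fin n) := ⟨⟨0, by omega⟩⟩
          refine ⟨EuclideanSpace.single (Classical.arbitrary (Fin n)) t, trivial, ?_⟩
          show ‖EuclideanSpace.single (Classical.arbitrary (Fin n)) t‖ = t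
          rw [EuclideanSpace.norm_single]
          exact Real.norm_of_nonneg ht
        rw [this]; exact convex_Ici 0
      · exact convexOn_univ_norm
    exact hcomp
  · -- nonnegativity
    intro x
    exact integral_nonneg (norm_nonneg x) fun r _ => gfun_nonneg n a r
  · -- zero set
    ext x
    simp only [Set.mem_setOf_eq, Metric.mem_closedBall, dist_zero_right]
    constructor
    · intro h
      by_contra hgt
      push_neg at hgt
      have h1 : IntervalIntegrable (gfun n a) MeasureTheory.volume 0 a :=
        (gfun_cont n a).intervalIntegrable _ _
      have h2 : IntervalIntegrable (gfun n a) MeasureTheory.volume a ‖x‖ :=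
        (gfun_cont n a).intervalIntegrable _ _
      have hsplit : ffun n a ‖x‖ = (∫ r in (0:ℝ)..a, gfun n a r) + ∫ r in a..‖x‖, gfun n a r := by
        rw [ffun, integral_add_adjacent_intervals h1 h2]
      have hpos : 0 < ∫ r in a..‖x‖, gfun n a r := by
        apply intervalIntegral_pos_of_pos_on h2 _ hgt
        intro r hr
        have hra : a < r := hr.1
        have : a ^ n < r ^ n := pow_lt_pow_left₀ hra ha.le (by omega)
        have hmax : max (r ^ n - a ^ n) 0 = r ^ n - a ^ n := max_eq_left (by linarith)
        rw [gfun, hmax]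
        exact Real.rpow_pos_of_pos (by linarith) _
      have hnn : 0 ≤ ∫ r in (0:ℝ)..a, gfun n a r :=
        integral_nonneg ha.le fun r _ => gfun_nonneg n a r
      rw [hfun x, hsplit] at h
      linarith
    · intro h
      rw [hfun x, ffun]
      have hzero : Set.EqOn (gfun n a) 0 (Set.uIcc 0 ‖x‖) := by
        intro r hr
        rw [Set.uIcc_of_le (norm_nonneg x)] at hr
        have hr0 : 0 ≤ r := hr.1
        have hrn : r ^ n ≤ a ^ n := pow_le_pow_left₀ hr0 (hr.2.trans h) n
        have hmax : max (r ^ n - a ^ n) 0 = 0 := max_eq_right (by linarith)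
        have hne : ((1:ℝ)/n) ≠ 0 := by
          have hnpos : (0:ℝ) < n := by exact_mod_cast Nat.lt_of_lt_of_le two_pos hn
          exact (div_pos one_pos hnpos).ne'
        show gfun n a r = 0
        rw [gfun, hmax, Real.zero_rpow hne]
      rw [intervalIntegral.integral_congr hzero]
      simp
end

section
/- For n ≥ 3, ∫₀^∞ ((1 + r^n)^{1/n} − r) dr = Γ(1/n)·Γ((n−2)/n) / (2n·Γ((n−1)/n)), where Γ is the Gamma function. -/
open MeasureTheory Real Set

lemma realBeta {p q : ℝ} (hp : 0 < p) (hq : 0 < q) :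
    ∫ x in Ioo (0:ℝ) 1, x ^ (p-1) * (1-x) ^ (q-1) =
      Gamma p * Gamma q / Gamma (p+q) := by
  have hB := Complex.Gamma_mul_Gamma_eq_betaIntegral
    (s := (p:ℂ)) (t := (q:ℂ)) (by simpa using hp) (by simpa using hq)
  have key : Complex.betaIntegral p q =
      ((∫ x in Ioo (0:ℝ) 1, x ^ (p-1) * (1-x) ^ (q-1) : ℝ) : ℂ) := by
    rw [Complex.betaIntegral, intervalIntegral.integral_of_le zero_le_one,
      MeasureTheory.integral_Ioc_eq_integral_Ioo]
    have hc : ∀ t ∈ Ioo (0:ℝ) 1,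
        (t:ℂ) ^ ((p:ℂ)-1) * (1-(t:ℂ)) ^ ((q:ℂ)-1)
          = ((t ^ (p-1) * (1-t) ^ (q-1) : ℝ) : ℂ) := by
      intro t ht
      obtain ⟨h0, h1⟩ := ht
      have e1 : ((1:ℂ) - (t:ℂ)) = ((1 - t : ℝ) : ℂ) := by push_cast; ring
      have e2 : ((p:ℂ) - 1) = ((p - 1 : ℝ) : ℂ) := by push_cast; ring
      have e3 : ((q:ℂ) - 1) = ((q - 1 : ℝ) : ℂ) := by push_cast; ring
      rw [e1, e2, e3, ← Complex.ofReal_cpow h0.le, ← Complex.ofReal_cpow (by linarith)]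
      push_cast; ring
    rw [setIntegral_congr_fun measurableSet_Ioo hc]
    exact integral_ofReal
  rw [key] at hB
  have hG : Complex.Gamma ((p:ℂ)+q) = ((Gamma (p+q) : ℝ) : ℂ) := by
    rw [← Complex.ofReal_add, Complex.Gamma_ofReal]
  rw [Complex.Gamma_ofReal, Complex.Gamma_ofReal, hG, ← Complex.ofReal_mul] at hB
  have hne : Gamma (p+q) ≠ 0 := (Real.Gamma_pos_of_pos (by linarith)).ne'
  have := Complex.ofReal_injective (by exact_mod_cast hB)
  field_simp
  linarith

lemma betaIoi {a b : ℝ} (ha : 0 < a) (hb : 0 < b) :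
    ∫ t in Ioi (0:ℝ), t ^ (a-1) * (1+t) ^ (-(a+b)) =
      Gamma a * Gamma b / Gamma (a+b) := by
  set g : ℝ → ℝ := fun t => t ^ (a-1) * (1+t) ^ (-(a+b)) with hg
  have himg : (fun u : ℝ => u / (1-u)) '' Ioo 0 1 = Ioi (0:ℝ) := by
    ext y
    constructor
    · rintro ⟨u, ⟨h0, h1⟩, rfl⟩
      exact div_pos h0 (by linarith)
    · intro hy
      have hy' : (0:ℝ) < y := hy
      refine ⟨y / (1+y), ⟨div_pos hy' (by linarith), ?_⟩, ?_⟩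
      · rw [div_lt_one (by linarith)]; linarith
      · have h1y : (0:ℝ) < 1 + y := by linarith
        field_simp
        ring
  have hderiv : ∀ u ∈ Ioo (0:ℝ) 1,
      HasDerivWithinAt (fun u : ℝ => u / (1-u)) (1/(1-u)^2) (Ioo 0 1) u := by
    intro u ⟨h0, h1⟩
    have hne : (1:ℝ) - u ≠ 0 := by linarith
    have := (hasDerivAt_id u).div ((hasDerivAt_id u).const_sub 1) hne
    simp only [id_eq, one_mul] at this
    rw [show (1:ℝ)/(1-u)^2 = (1 - u - u * -1)/(1-u)^2 by ring]
    exact this.hasDerivWithinAt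
  have hinj : InjOn (fun u : ℝ => u / (1-u)) (Ioo 0 1) := by
    rintro u ⟨hu0, hu1⟩ v ⟨hv0, hv1⟩ h
    have h1 : (1:ℝ) - u ≠ 0 := by linarith
    have h2 : (1:ℝ) - v ≠ 0 := by linarith
    field_simp at h
    linarith
  have key := integral_image_eq_integral_abs_deriv_smul measurableSet_Ioo hderiv hinj g
  rw [himg] at key
  rw [key, ← realBeta ha hb]
  refine setIntegral_congr_fun measurableSet_Ioo fun u ⟨h0, h1⟩ => ?_
  have hv : (0:ℝ) < 1 - u := by linarith
  have h1u : (1:ℝ) + u/(1-u) = (1-u)⁻¹ := by field_simp; ring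
  have habs : |1/(1-u)^2| = (1-u) ^ (-2:ℝ) := by
    rw [abs_of_pos (by positivity), Real.rpow_neg hv.le,
      show ((2:ℝ)) = ((2:ℕ):ℝ) by norm_num, Real.rpow_natCast, one_div]
  have hdiv : (u/(1-u)) ^ (a-1) = u ^ (a-1) * (1-u) ^ (-(a-1)) := by
    rw [div_eq_mul_inv, Real.mul_rpow h0.le (by positivity), Real.inv_rpow hv.le,
      ← Real.rpow_neg hv.le]
  have hmid : ((1:ℝ) + u/(1-u)) ^ (-(a+b)) = (1-u) ^ (a+b) := by
    rw [h1u, Real.inv_rpow hv.le, ← Real.rpow_neg hv.le, neg_neg]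
  rw [smul_eq_mul, hg]
  simp only []
  rw [hmid, hdiv, habs]
  rw [show (1-u) ^ (-2:ℝ) * (u ^ (a-1) * (1-u) ^ (-(a-1)) * (1-u) ^ (a+b))
      = u ^ (a-1) * ((1-u) ^ (-2:ℝ) * (1-u) ^ (-(a-1)) * (1-u) ^ (a+b)) by ring,
    ← Real.rpow_add hv, ← Real.rpow_add hv]
  congr 1
  ring

lemma intC (n : ℕ) (hn : 3 ≤ n) :
    ∫ r in Ioi (0:ℝ), (1 + r ^ n) ^ ((1:ℝ)/n - 1) =
      Gamma (1/n) * Gamma (1 - 2/n) / ((n:ℝ) * Gamma (1 - 1/n)) := by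
  have hN : (0:ℝ) < n := Nat.cast_pos.mpr (by omega)
  have h2n : 0 < 1 - 2/(n:ℝ) := by
    rw [sub_pos, div_lt_one hN]
    exact_mod_cast (by omega : 2 < n)
  have hB := betaIoi (a := 1/(n:ℝ)) (b := 1 - 2/(n:ℝ)) (by positivity) h2n
  have hab : (1:ℝ)/n + (1 - 2/n) = 1 - 1/n := by ring
  have hexp : ∀ t : ℝ, t ^ ((1:ℝ)/n - 1) * (1+t) ^ (-(1/(n:ℝ) + (1 - 2/n)))
      = t ^ ((1:ℝ)/n - 1) * (1+t) ^ ((1:ℝ)/n - 1) := by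
    intro t; congr 1; ring_nf
  have hB' : ∫ t in Ioi (0:ℝ), t ^ ((1:ℝ)/n - 1) * (1+t) ^ ((1:ℝ)/n - 1)
      = Gamma (1/n) * Gamma (1 - 2/n) / Gamma (1 - 1/n) := by
    rw [← hab]
    rw [show (1:ℝ)/(n:ℝ) - 1 = 1/(n:ℝ) - 1 from rfl] at hB
    calc ∫ t in Ioi (0:ℝ), t ^ ((1:ℝ)/n - 1) * (1+t) ^ ((1:ℝ)/n - 1)
        = ∫ t in Ioi (0:ℝ), t ^ ((1:ℝ)/n - 1) * (1+t) ^ (-(1/(n:ℝ) + (1 - 2/n))) := by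
          refine setIntegral_congr_fun measurableSet_Ioi fun t _ => ?_
          exact (hexp t).symm
      _ = _ := hB
  have hg := integral_comp_rpow_Ioi
    (fun t => t ^ ((1:ℝ)/n - 1) * (1+t) ^ ((1:ℝ)/n - 1)) (p := (n:ℝ)) hN.ne'
  have hcong : ∫ x in Ioi (0:ℝ),
      (|(n:ℝ)| * x ^ ((n:ℝ) - 1)) •
        ((fun t => t ^ ((1:ℝ)/n - 1) * (1+t) ^ ((1:ℝ)/n - 1)) (x ^ (n:ℝ)))
      = ∫ x in Ioi (0:ℝ), (n:ℝ) * ((1 + x ^ n) ^ ((1:ℝ)/n - 1)) := by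
    refine setIntegral_congr_fun measurableSet_Ioi fun x hx => ?_
    have hx' : (0:ℝ) < x := hx
    simp only [smul_eq_mul, abs_of_pos hN]
    rw [← Real.rpow_natCast x n, ← Real.rpow_mul hx'.le]
    have he : (n:ℝ) * ((1:ℝ)/n - 1) = 1 - n := by field_simp
    rw [he, show (n:ℝ) * x ^ ((n:ℝ)-1) * (x ^ (1-(n:ℝ)) * (1 + x ^ (n:ℝ)) ^ ((1:ℝ)/n - 1))
        = (n:ℝ) * ((x ^ ((n:ℝ)-1) * x ^ (1-(n:ℝ))) * (1 + x ^ (n:ℝ)) ^ ((1:ℝ)/n - 1)) by ring,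
      ← Real.rpow_add hx']
    norm_num
  rw [hcong, MeasureTheory.integral_const_mul, hB'] at hg
  have heq : ∫ r in Ioi (0:ℝ), (1 + r ^ n) ^ ((1:ℝ)/n - 1)
      = Gamma (1/n) * Gamma (1 - 2/n) / Gamma (1 - 1/n) / n := by
    rw [← hg, mul_comm, mul_div_assoc, div_self hN.ne', mul_one]
  rw [heq, div_div, mul_comm (Gamma (1 - 1/(n:ℝ)))]

/-- For `n ≥ 3`, `∫₀^∞ ((1 + r^n)^{1/n} − r) dr = Γ(1/n)Γ((n−2)/n)/(2n Γ((n−1)/n))`. -/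
theorem stmt_7 (n : ℕ) (hn : 3 ≤ n) :
    (∫ r in Set.Ioi (0:ℝ), ((1 + r ^ n) ^ ((1:ℝ)/n) - r)) =
      Real.Gamma (1 / n) * Real.Gamma ((n - 2) / n) /
        (2 * n * Real.Gamma ((n - 1) / n)) := by
  have hN : (0:ℝ) < n := Nat.cast_pos.mpr (by omega)
  have hN3 : (3:ℝ) ≤ n := by exact_mod_cast hn
  set f : ℝ → ℝ := fun r => (1 + r ^ n) ^ ((1:ℝ)/n) - r with hfdef
  set h : ℝ → ℝ := fun r => (1 + r ^ n) ^ ((1:ℝ)/n - 1) with hhdef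
  set G : ℝ → ℝ := fun r => r * (1 + r ^ n) ^ ((1:ℝ)/n) - r ^ 2 with hGdef
  -- positivity of the base
  have hbase : ∀ r : ℝ, 0 ≤ r → (0:ℝ) < 1 + r ^ n := by
    intro r hr
    have := pow_nonneg hr n
    linarith
  -- (X^n)^(1/n) = X for X ≥ 0
  have hroot : ∀ X : ℝ, 0 ≤ X → (X ^ n) ^ ((1:ℝ)/n) = X := by
    intro X hX
    rw [← Real.rpow_natCast X n, ← Real.rpow_mul hX, mul_one_div_cancel hN.ne', Real.rpow_one]
  -- nonnegativity of f
  have hf_nonneg : ∀ r : ℝ, 0 ≤ r → 0 ≤ f r := by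
    intro r hr
    have h1 : r = (r ^ n) ^ ((1:ℝ)/n) := (hroot r hr).symm
    have h2 : (r ^ n) ^ ((1:ℝ)/n) ≤ (1 + r ^ n) ^ ((1:ℝ)/n) :=
      Real.rpow_le_rpow (pow_nonneg hr n) (by linarith) (by positivity)
    simp only [hfdef, sub_nonneg]
    calc r = (r ^ n) ^ ((1:ℝ)/n) := h1
      _ ≤ _ := h2
  -- upper bound for f on [1, ∞)
  have hf_le : ∀ r : ℝ, 1 ≤ r → f r ≤ r ^ ((1:ℝ) - n) := by
    intro r hr
    have hr0 : (0:ℝ) < r := by linarith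
    have hkey : 1 + r ^ n ≤ (r + r ^ ((1:ℝ) - n)) ^ n := by
      have e1 : r + r ^ ((1:ℝ) - n) = r * (1 + r ^ (-(n:ℝ))) := by
        rw [mul_add, mul_one, ← Real.rpow_one_add' hr0.le (by intro hc; nlinarith)]
        ring_nf
      rw [e1, mul_pow]
      have h2 : (1:ℝ) + r ^ (-(n:ℝ)) ≤ (1 + r ^ (-(n:ℝ))) ^ n := by
        refine le_self_pow₀ (le_add_of_nonneg_right (by positivity)) (by omega)
      have h3 : r ^ n * (1 + r ^ (-(n:ℝ))) ≤ r ^ n * (1 + r ^ (-(n:ℝ))) ^ n :=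
        mul_le_mul_of_nonneg_left h2 (by positivity)
      have h4 : r ^ n * (1 + r ^ (-(n:ℝ))) = r ^ n + 1 := by
        rw [mul_add, mul_one, ← Real.rpow_natCast r n, ← Real.rpow_add hr0]
        norm_num
      linarith
    have h5 : (1 + r ^ n) ^ ((1:ℝ)/n) ≤ r + r ^ ((1:ℝ) - n) := by
      have := Real.rpow_le_rpow (by positivity) hkey (by positivity : (0:ℝ) ≤ 1/n)
      rwa [hroot _ (by positivity)] at this
    simp only [hfdef]
    linarith
  -- bounds for h
  have hh_nonneg : ∀ r : ℝ, 0 ≤ r → 0 ≤ h r := fun r hr =>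
    Real.rpow_nonneg (hbase r hr).le _
  have hh_le : ∀ r : ℝ, 1 ≤ r → h r ≤ r ^ ((1:ℝ) - n) := by
    intro r hr
    have hr0 : (0:ℝ) < r := by linarith
    have h1 : (1 + r ^ n) ^ ((1:ℝ)/n - 1) ≤ (r ^ n) ^ ((1:ℝ)/n - 1) := by
      refine Real.rpow_le_rpow_of_nonpos (by positivity) (by linarith) ?_
      rw [sub_nonpos, div_le_one hN]
      linarith
    have h2 : (r ^ n) ^ ((1:ℝ)/n - 1) = r ^ ((1:ℝ) - n) := by
      rw [← Real.rpow_natCast r n, ← Real.rpow_mul hr0.le]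
      congr 1
      field_simp
    simp only [hhdef]
    rw [← h2]
    exact h1
  -- continuity
  have hcontf : Continuous f := by
    apply Continuous.sub ?_ continuous_id
    exact (continuous_const.add (continuous_pow n)).rpow_const fun x => Or.inr (by positivity)
  have hconth : ContinuousOn h (Set.Ici 0) := by
    refine ContinuousOn.rpow_const
      ((continuous_const.add (continuous_pow n)).continuousOn) fun x hx => Or.inl ?_
    exact (hbase x hx).ne'
  -- integrability of f
  have intf : IntegrableOn f (Set.Ioi 0) := by
    rw [← Set.Ioc_union_Ioi_eq_Ioi (zero_le_one' ℝ)]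
    refine IntegrableOn.union ?_ ?_
    · exact (hcontf.integrableOn_Icc (a := 0) (b := 1)).mono_set Set.Ioc_subset_Icc_self
    · refine (integrableOn_Ioi_rpow_of_lt (by linarith : (1:ℝ) - n < -1) one_pos).mono'
        (hcontf.aestronglyMeasurable.restrict) ?_
      refine (ae_restrict_iff' measurableSet_Ioi).mpr (ae_of_all _ fun r hr => ?_)
      have hr1 : (1:ℝ) ≤ r := le_of_lt hr
      rw [Real.norm_eq_abs, abs_of_nonneg (hf_nonneg r (by linarith))]
      exact hf_le r hr1
  -- integrability of h
  have inth : IntegrableOn h (Set.Ioi 0) := by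
    rw [← Set.Ioc_union_Ioi_eq_Ioi (zero_le_one' ℝ)]
    refine IntegrableOn.union ?_ ?_
    · refine ((hconth.mono (Set.Icc_subset_Ici_self)).integrableOn_Icc (a := 0) (b := 1)).mono_set
        Set.Ioc_subset_Icc_self
    · refine (integrableOn_Ioi_rpow_of_lt (by linarith : (1:ℝ) - n < -1) one_pos).mono'
        ((hconth.mono (fun x (hx : x ∈ Set.Ioi (1:ℝ)) => le_of_lt (show (0:ℝ) < x by linarith [hx.out]))).aestronglyMeasurable measurableSet_Ioi) ?_
      refine (ae_restrict_iff' measurableSet_Ioi).mpr (ae_of_all _ fun r hr => ?_)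
      have hr1 : (1:ℝ) ≤ r := le_of_lt hr
      rw [Real.norm_eq_abs, abs_of_nonneg (hh_nonneg r (by linarith))]
      exact hh_le r hr1
  -- derivative of G
  have hGderiv : ∀ r ∈ Set.Ioi (0:ℝ), HasDerivAt G (2 * f r - h r) r := by
    intro r hr
    have hr0 : (0:ℝ) < r := hr
    have hb := hbase r hr0.le
    have d1 : HasDerivAt (fun r : ℝ => 1 + r ^ n) ((n:ℝ) * r ^ (n-1)) r :=
      (hasDerivAt_pow n r).const_add 1
    have d2 : HasDerivAt (fun x : ℝ => x ^ ((1:ℝ)/n))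
        ((1/(n:ℝ)) * (1 + r ^ n) ^ ((1:ℝ)/n - 1)) (1 + r ^ n) :=
      Real.hasDerivAt_rpow_const (Or.inl hb.ne')
    have d3 : HasDerivAt (fun r : ℝ => (1 + r ^ n) ^ ((1:ℝ)/n))
        ((1/(n:ℝ)) * (1 + r ^ n) ^ ((1:ℝ)/n - 1) * ((n:ℝ) * r ^ (n-1))) r := by have := d2.comp r d1; exact this
    have d4 : HasDerivAt (fun r : ℝ => r * (1 + r ^ n) ^ ((1:ℝ)/n))
        (1 * (1 + r ^ n) ^ ((1:ℝ)/n)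
          + r * ((1/(n:ℝ)) * (1 + r ^ n) ^ ((1:ℝ)/n - 1) * ((n:ℝ) * r ^ (n-1)))) r :=
      (hasDerivAt_id r).mul d3
    have d5 : HasDerivAt G
        (1 * (1 + r ^ n) ^ ((1:ℝ)/n)
          + r * ((1/(n:ℝ)) * (1 + r ^ n) ^ ((1:ℝ)/n - 1) * ((n:ℝ) * r ^ (n-1)))
          - 2 * r ^ (2-1)) r := d4.sub (hasDerivAt_pow 2 r)
    convert d5 using 1
    have hrr : r * r ^ (n-1) = r ^ n := by
      rw [← pow_succ']
      congr 1
      omega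
    have e1 : r * ((1/(n:ℝ)) * (1 + r ^ n) ^ ((1:ℝ)/n - 1) * ((n:ℝ) * r ^ (n-1)))
        = r ^ n * (1 + r ^ n) ^ ((1:ℝ)/n - 1) := by
      calc r * ((1/(n:ℝ)) * (1 + r ^ n) ^ ((1:ℝ)/n - 1) * ((n:ℝ) * r ^ (n-1)))
          = ((1/(n:ℝ)) * n) * ((r * r ^ (n-1)) * (1 + r ^ n) ^ ((1:ℝ)/n - 1)) := by ring
        _ = r ^ n * (1 + r ^ n) ^ ((1:ℝ)/n - 1) := by
            rw [one_div_mul_cancel hN.ne', hrr, one_mul]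
    have e2 : (1 + r ^ n) ^ ((1:ℝ)/n) = (1 + r ^ n) * (1 + r ^ n) ^ ((1:ℝ)/n - 1) := by
      rw [← Real.rpow_one_add' hb.le (by rw [add_sub_cancel]; positivity)]
      congr 1
      ring
    rw [e1]
    simp only [hfdef, hhdef]
    rw [e2]
    norm_num
    ring
  -- limit of G at infinity
  have hGf : ∀ r : ℝ, G r = r * f r := by
    intro r; simp only [hGdef, hfdef]; ring
  have hGlim : Filter.Tendsto G Filter.atTop (nhds 0) := by
    have hmaj : Filter.Tendsto (fun r : ℝ => r ^ (-((n:ℝ) - 2))) Filter.atTop (nhds 0) :=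
      tendsto_rpow_neg_atTop (by linarith)
    refine squeeze_zero' ?_ ?_ hmaj
    · filter_upwards [Filter.eventually_ge_atTop (1:ℝ)] with r hr
      rw [hGf]
      exact mul_nonneg (by linarith) (hf_nonneg r (by linarith))
    · filter_upwards [Filter.eventually_ge_atTop (1:ℝ)] with r hr
      rw [hGf]
      have hr0 : (0:ℝ) < r := by linarith
      calc r * f r ≤ r * r ^ ((1:ℝ) - n) :=
            mul_le_mul_of_nonneg_left (hf_le r hr) (by linarith)
        _ = r ^ (-((n:ℝ) - 2)) := by
            rw [← Real.rpow_one_add' hr0.le (by intro hc; nlinarith)]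
            congr 1
            ring
  -- continuity of G
  have hcontG : Continuous G := by
    refine Continuous.sub (Continuous.mul continuous_id ?_) (continuous_pow 2)
    exact (continuous_const.add (continuous_pow n)).rpow_const fun x => Or.inr (by positivity)
  have hG0 : G 0 = 0 := by
    simp [hGdef, zero_pow (by omega : n ≠ 0)]
  have intG' : IntegrableOn (fun r => 2 * f r - h r) (Set.Ioi 0) :=
    (intf.const_mul 2).sub inth
  have hFTC : ∫ r in Set.Ioi (0:ℝ), (2 * f r - h r) = 0 - G 0 :=
    MeasureTheory.integral_Ioi_of_hasDerivAt_of_tendsto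
      hcontG.continuousWithinAt hGderiv intG' hGlim
  have hsplit : ∫ r in Set.Ioi (0:ℝ), f r
      = ((∫ r in Set.Ioi (0:ℝ), (2 * f r - h r)) + ∫ r in Set.Ioi (0:ℝ), h r) / 2 := by
    rw [← MeasureTheory.integral_add intG' inth]
    have e : ∀ r : ℝ, (2 * f r - h r) + h r = 2 * f r := fun r => by ring
    simp_rw [e]
    rw [MeasureTheory.integral_const_mul]
    ring
  have hC : ∫ r in Set.Ioi (0:ℝ), h r
      = Gamma (1/n) * Gamma (1 - 2/n) / ((n:ℝ) * Gamma (1 - 1/n)) := intC n hn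
  calc ∫ r in Set.Ioi (0:ℝ), f r
      = ((∫ r in Set.Ioi (0:ℝ), (2 * f r - h r)) + ∫ r in Set.Ioi (0:ℝ), h r) / 2 := hsplit
    _ = Gamma (1/n) * Gamma (1 - 2/n) / ((n:ℝ) * Gamma (1 - 1/n)) / 2 := by
        rw [hFTC, hG0, hC]; ring
    _ = Gamma (1/(n:ℝ)) * Gamma (((n:ℝ) - 2) / n) / (2 * n * Gamma (((n:ℝ) - 1) / n)) := by
        rw [show (1:ℝ) - 2/n = ((n:ℝ) - 2)/n by field_simp,
          show (1:ℝ) - 1/n = ((n:ℝ) - 1)/n by field_simp]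
        ring
end

section
/- For n ≥ 3, a > 0, and R ≥ a, one has 0 ≤ d_{n,0}·a² − ∫_0^R (r − max(r^n − a^n, 0)^{1/n}) dr ≤ C_n · a^n / R^{n−2} for a constant C_n depending only on n, where d_{n,0}·a² = ∫₀^∞ (r − max(r^n − a^n,0)^{1/n}) dr. In particular, W_a^*(x) = |x|²/2 − d_{n,0}a² + O(a^n/|x|^{n−2}) as |x| → ∞, with the same constant d_{n,0} as in the expansion of W_a. -/
open MeasureTheory Set

namespace Stmt9Aux

variable {n : ℕ}

lemma pow_rpow (hn : n ≠ 0) {x : ℝ} (hx : 0 ≤ x) : (x ^ n) ^ ((1:ℝ)/n) = x := by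
  rw [← Real.rpow_natCast x n, ← Real.rpow_mul hx]
  rw [mul_one_div, div_self (by exact_mod_cast hn), Real.rpow_one]

lemma rpow_pow (hn : n ≠ 0) {x : ℝ} (hx : 0 ≤ x) : (x ^ ((1:ℝ)/n)) ^ n = x := by
  rw [← Real.rpow_natCast (x ^ ((1:ℝ)/n)) n, ← Real.rpow_mul hx]
  rw [one_div_mul_cancel (by exact_mod_cast hn), Real.rpow_one]

lemma cont (hn : n ≠ 0) (a : ℝ) :
    Continuous fun r : ℝ => r - (max (r ^ n - a ^ n) 0) ^ ((1:ℝ)/n) := by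
  have h : (0:ℝ) < 1/n := by
    have : 0 < (n:ℝ) := by exact_mod_cast Nat.pos_of_ne_zero hn
    positivity
  refine continuous_id.sub ?_
  have hc : Continuous fun r : ℝ => max (r ^ n - a ^ n) 0 :=
    ((continuous_pow n).sub continuous_const).max continuous_const
  exact continuous_iff_continuousAt.2 fun x =>
    (Real.continuousAt_rpow_const _ _ (Or.inr h.le)).comp hc.continuousAt

lemma nonneg (hn : n ≠ 0) {a : ℝ} (ha : 0 ≤ a) {r : ℝ} (hr : 0 ≤ r) :
    0 ≤ r - (max (r ^ n - a ^ n) 0) ^ ((1:ℝ)/n) := by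
  have h1 : max (r ^ n - a ^ n) 0 ≤ r ^ n :=
    max_le (sub_le_self _ (pow_nonneg ha n)) (by positivity)
  have h2 : (max (r ^ n - a ^ n) 0) ^ ((1:ℝ)/n) ≤ (r ^ n) ^ ((1:ℝ)/n) :=
    Real.rpow_le_rpow (le_max_right _ _) h1 (by positivity)
  rw [pow_rpow hn hr] at h2
  linarith

lemma bound (hn : n ≠ 0) {a r : ℝ} (ha : 0 ≤ a) (hr : 0 < r) :
    r - (max (r ^ n - a ^ n) 0) ^ ((1:ℝ)/n) ≤ a ^ n * r ^ ((1:ℝ) - n) := by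
  have hrn : (0:ℝ) < r ^ n := pow_pos hr n
  have hrw : r ^ ((1:ℝ) - n) = r / r ^ n := by
    rw [Real.rpow_sub hr, Real.rpow_one, Real.rpow_natCast]
  rw [hrw]
  have hrpow0 : 0 ≤ (max (r ^ n - a ^ n) 0) ^ ((1:ℝ)/n) :=
    Real.rpow_nonneg (le_max_right _ _) _
  rcases le_or_gt (r - a ^ n * (r / r ^ n)) 0 with h | h
  · linarith
  · set m := r - a ^ n * (r / r ^ n) with hm
    have hmeq : m = r * (1 - a ^ n / r ^ n) := by rw [hm]; ring
    have ht1 : a ^ n / r ^ n < 1 := by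
      by_contra hc
      push_neg at hc
      have : 1 - a ^ n / r ^ n ≤ 0 := by linarith
      nlinarith [hmeq ▸ h]
    have ht0 : 0 ≤ a ^ n / r ^ n := by positivity
    have hpow : (1 - a ^ n / r ^ n) ^ n ≤ 1 - a ^ n / r ^ n :=
      pow_le_of_le_one (by linarith) (by linarith) hn
    have hle : m ^ n ≤ r ^ n - a ^ n := by
      have : m ^ n = r ^ n * (1 - a ^ n / r ^ n) ^ n := by rw [hmeq, mul_pow]
      rw [this]
      have h2 : r ^ n * (1 - a ^ n / r ^ n) = r ^ n - a ^ n := by field_simp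
      nlinarith
    have hle' : m ^ n ≤ max (r ^ n - a ^ n) 0 := le_max_of_le_left hle
    have : m ≤ (max (r ^ n - a ^ n) 0) ^ ((1:ℝ)/n) := by
      calc m = (m ^ n) ^ ((1:ℝ)/n) := (pow_rpow hn h.le).symm
        _ ≤ _ := Real.rpow_le_rpow (pow_nonneg h.le n) hle' (by positivity)
    linarith [hm ▸ this]

lemma integrable_bound (hn : 3 ≤ n) (a : ℝ) {c : ℝ} (hc : 0 < c) :
    IntegrableOn (fun r : ℝ => a ^ n * r ^ ((1:ℝ) - n)) (Ioi c) := by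
  have h1 : ((1:ℝ) - n) < -1 := by
    have : (3:ℝ) ≤ n := by exact_mod_cast hn
    linarith
  exact (integrableOn_Ioi_rpow_of_lt h1 hc).const_mul _

lemma integrableOn_Ioi (hn : 3 ≤ n) {a : ℝ} (ha : 0 < a) :
    IntegrableOn (fun r : ℝ => r - (max (r ^ n - a ^ n) 0) ^ ((1:ℝ)/n)) (Ioi 0) := by
  have hn0 : n ≠ 0 := by omega
  have h1 : IntegrableOn (fun r : ℝ => r - (max (r ^ n - a ^ n) 0) ^ ((1:ℝ)/n)) (Ioc 0 a) :=
    (cont hn0 a).integrableOn_Ioc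
  have h2 : IntegrableOn (fun r : ℝ => r - (max (r ^ n - a ^ n) 0) ^ ((1:ℝ)/n)) (Ioi a) := by
    refine Integrable.mono (integrable_bound hn a ha) ((cont hn0 a).aestronglyMeasurable.restrict) ?_
    rw [ae_restrict_iff' measurableSet_Ioi]
    filter_upwards with r hr
    have hr0 : 0 < r := lt_trans ha hr
    rw [Real.norm_eq_abs, Real.norm_eq_abs, abs_of_nonneg (nonneg hn0 ha.le hr0.le),
      abs_of_nonneg (by positivity)]
    exact bound hn0 ha.le hr0
  have := h1.union h2
  rwa [Ioc_union_Ioi_eq_Ioi ha.le] at this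

lemma scale (hn : 3 ≤ n) {a : ℝ} (ha : 0 < a) :
    (∫ r in Ioi (0:ℝ), (r - (max (r ^ n - a ^ n) 0) ^ ((1:ℝ)/n)))
      = a ^ 2 * ∫ s in Ioi (0:ℝ), (s - (max (s ^ n - 1) 0) ^ ((1:ℝ)/n)) := by
  have hn0 : n ≠ 0 := by omega
  have h := integral_comp_mul_left_Ioi
    (fun r : ℝ => r - (max (r ^ n - a ^ n) 0) ^ ((1:ℝ)/n)) 0 ha
  rw [mul_zero] at h
  have hfun : ∀ s : ℝ, (a * s - (max ((a*s) ^ n - a ^ n) 0) ^ ((1:ℝ)/n))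
      = a * (s - (max (s ^ n - 1) 0) ^ ((1:ℝ)/n)) := by
    intro s
    have h1 : max ((a*s) ^ n - a ^ n) 0 = a ^ n * max (s ^ n - 1) 0 := by
      rw [mul_max_of_nonneg _ _ (by positivity : (0:ℝ) ≤ a ^ n)]
      rw [mul_pow, mul_sub, mul_one, mul_zero]
    rw [h1, Real.mul_rpow (by positivity) (le_max_right _ _), pow_rpow hn0 ha.le]
    ring
  simp only [hfun] at h
  rw [integral_const_mul] at h
  have : (∫ r in Ioi (0:ℝ), (r - (max (r ^ n - a ^ n) 0) ^ ((1:ℝ)/n)))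
      = a * (a * ∫ s in Ioi (0:ℝ), (s - (max (s ^ n - 1) 0) ^ ((1:ℝ)/n))) := by
    rw [h, smul_eq_mul, ← mul_assoc, mul_inv_cancel₀ ha.ne', one_mul]
  rw [this]; ring

lemma fubini_key (hn : 3 ≤ n) :
    (∫ s in Ioi (0:ℝ), (s - (max (s ^ n - 1) 0) ^ ((1:ℝ)/n)))
      = ∫ y in Ioi (0:ℝ), ((1 + y ^ n) ^ ((1:ℝ)/n) - y) := by
  have hn0 : n ≠ 0 := by omega
  set F : ℝ → ℝ := fun s => s - (max (s ^ n - 1) 0) ^ ((1:ℝ)/n) with hF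
  set G : ℝ → ℝ := fun y => (1 + y ^ n) ^ ((1:ℝ)/n) - y with hG
  have hFcont : Continuous F := by
    have := cont (n := n) hn0 1
    simp only [one_pow] at this
    exact this
  have hGcont : Continuous G := by
    refine Continuous.sub ?_ continuous_id
    refine continuous_iff_continuousAt.2 fun y => ?_
    exact (Real.continuousAt_rpow_const _ _ (Or.inr (by positivity))).comp
      ((continuous_const.add (continuous_pow n)).continuousAt)
  have hGnonneg : ∀ y : ℝ, 0 ≤ y → 0 ≤ G y := by
    intro y hy
    have h1 : y ^ n ≤ 1 + y ^ n := by linarith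
    have h2 : (y ^ n) ^ ((1:ℝ)/n) ≤ (1 + y ^ n) ^ ((1:ℝ)/n) :=
      Real.rpow_le_rpow (by positivity) h1 (by positivity)
    rw [pow_rpow hn0 hy] at h2
    simp only [hG]; linarith
  have hFnonneg : ∀ s : ℝ, 0 ≤ s → 0 ≤ F s := by
    intro s hs
    have := nonneg (n := n) hn0 zero_le_one hs
    simp only [one_pow] at this
    exact this
  -- the region
  set S : Set (ℝ × ℝ) := {p : ℝ × ℝ | p.2 < p.1 ∧ p.1 ^ n < 1 + p.2 ^ n} with hS
  have hSopen : IsOpen S :=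
    IsOpen.inter (isOpen_lt continuous_snd continuous_fst)
      (isOpen_lt (continuous_fst.pow n) (continuous_const.add (continuous_snd.pow n)))
  have hSmeas : MeasurableSet S := hSopen.measurableSet
  set k : ℝ → ℝ → ENNReal := fun s y => S.indicator 1 (s, y) with hk
  have hslice1 : ∀ s : ℝ, 0 < s →
      {y : ℝ | (s, y) ∈ S} ∩ Ioi 0 = Ioo ((max (s ^ n - 1) 0) ^ ((1:ℝ)/n)) s := by
    intro s hs
    ext y
    simp only [hS, mem_inter_iff, mem_setOf_eq, mem_Ioi, mem_Ioo]
    constructor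
    · rintro ⟨⟨h1, h2⟩, h3⟩
      refine ⟨?_, h1⟩
      have hmax : max (s ^ n - 1) 0 < y ^ n := by
        refine max_lt (by linarith) (by positivity)
      calc (max (s ^ n - 1) 0) ^ ((1:ℝ)/n) < (y ^ n) ^ ((1:ℝ)/n) :=
            Real.rpow_lt_rpow (le_max_right _ _) hmax (by positivity)
        _ = y := pow_rpow hn0 h3.le
    · rintro ⟨h1, h2⟩
      have hy0 : 0 < y := lt_of_le_of_lt (Real.rpow_nonneg (le_max_right _ _) _) h1
      refine ⟨⟨h2, ?_⟩, hy0⟩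
      have := pow_lt_pow_left₀ h1 (Real.rpow_nonneg (le_max_right _ _) _) hn0
      rw [rpow_pow hn0 (le_max_right _ _)] at this
      have h4 : s ^ n - 1 ≤ max (s ^ n - 1) 0 := le_max_left _ _
      linarith
  have hslice2 : ∀ y : ℝ, 0 < y →
      {s : ℝ | (s, y) ∈ S} ∩ Ioi 0 = Ioo y ((1 + y ^ n) ^ ((1:ℝ)/n)) := by
    intro y hy
    ext s
    simp only [hS, mem_inter_iff, mem_setOf_eq, mem_Ioi, mem_Ioo]
    constructor
    · rintro ⟨⟨h1, h2⟩, h3⟩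
      refine ⟨h1, ?_⟩
      calc s = (s ^ n) ^ ((1:ℝ)/n) := (pow_rpow hn0 h3.le).symm
        _ < (1 + y ^ n) ^ ((1:ℝ)/n) := Real.rpow_lt_rpow (by positivity) h2 (by positivity)
    · rintro ⟨h1, h2⟩
      have hs0 : 0 < s := lt_trans hy h1
      refine ⟨⟨h1, ?_⟩, hs0⟩
      have := pow_lt_pow_left₀ h2 hs0.le hn0
      rwa [rpow_pow hn0 (by positivity)] at this
  -- lintegral forms
  have hl1 : ∫⁻ s in Ioi (0:ℝ), ENNReal.ofReal (F s)
      = ∫⁻ s in Ioi (0:ℝ), ∫⁻ y in Ioi (0:ℝ), k s y := by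
    refine setLIntegral_congr_fun measurableSet_Ioi ?_
    intro s hs
    have hmeas : MeasurableSet {y : ℝ | (s, y) ∈ S} :=
      hSmeas.preimage measurable_prodMk_left
    have heq : ∫⁻ y in Ioi (0:ℝ), k s y
        = volume ({y : ℝ | (s, y) ∈ S} ∩ Ioi 0) := by
      have h : ∀ y, k s y = ({y : ℝ | (s, y) ∈ S}).indicator 1 y := fun y => rfl
      simp only [h]
      rw [lintegral_indicator (μ := volume.restrict (Ioi 0)) hmeas]
      simp only [Pi.one_apply]
      rw [setLIntegral_one, Measure.restrict_apply hmeas]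
    beta_reduce
    rw [heq, hslice1 s hs, Real.volume_Ioo]
  have hl2 : ∫⁻ y in Ioi (0:ℝ), ENNReal.ofReal (G y)
      = ∫⁻ y in Ioi (0:ℝ), ∫⁻ s in Ioi (0:ℝ), k s y := by
    refine setLIntegral_congr_fun measurableSet_Ioi ?_
    intro y hy
    have hmeas : MeasurableSet {s : ℝ | (s, y) ∈ S} :=
      hSmeas.preimage (measurable_id.prodMk measurable_const)
    have heq : ∫⁻ s in Ioi (0:ℝ), k s y
        = volume ({s : ℝ | (s, y) ∈ S} ∩ Ioi 0) := by
      have h : ∀ s, k s y = ({s : ℝ | (s, y) ∈ S}).indicator 1 s := fun s => rfl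
      simp only [h]
      rw [lintegral_indicator (μ := volume.restrict (Ioi 0)) hmeas]
      simp only [Pi.one_apply]
      rw [setLIntegral_one, Measure.restrict_apply hmeas]
    beta_reduce
    rw [heq, hslice2 y hy, Real.volume_Ioo]
  have hswap : ∫⁻ s in Ioi (0:ℝ), ∫⁻ y in Ioi (0:ℝ), k s y
      = ∫⁻ y in Ioi (0:ℝ), ∫⁻ s in Ioi (0:ℝ), k s y := by
    refine lintegral_lintegral_swap ?_
    have : Function.uncurry k = S.indicator 1 := by
      ext p; cases p; rfl
    rw [this]
    exact (measurable_const.indicator hSmeas).aemeasurable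
  -- convert to real integrals
  have hFi : (∫ s in Ioi (0:ℝ), F s)
      = (∫⁻ s in Ioi (0:ℝ), ENNReal.ofReal (F s)).toReal := by
    refine integral_eq_lintegral_of_nonneg_ae ?_ hFcont.aestronglyMeasurable.restrict
    filter_upwards [ae_restrict_mem measurableSet_Ioi] with s hs
    exact hFnonneg s (le_of_lt hs)
  have hGi : (∫ y in Ioi (0:ℝ), G y)
      = (∫⁻ y in Ioi (0:ℝ), ENNReal.ofReal (G y)).toReal := by
    refine integral_eq_lintegral_of_nonneg_ae ?_ hGcont.aestronglyMeasurable.restrict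
    filter_upwards [ae_restrict_mem measurableSet_Ioi] with y hy
    exact hGnonneg y (le_of_lt hy)
  show (∫ s in Ioi (0:ℝ), F s) = ∫ y in Ioi (0:ℝ), G y
  rw [hFi, hGi, hl1, hl2, hswap]

end Stmt9Aux

open Stmt9Aux

/-- For `n ≥ 3` there is a constant `C_n` depending only on `n` such that for all
`a > 0` and `R ≥ a`:
`0 ≤ d_{n,0}a² − ∫₀^R (r − max(r^n − a^n,0)^{1/n}) dr ≤ C_n a^n/R^{n−2}`,
where `d_{n,0}a² = ∫₀^∞ (r − max(r^n − a^n,0)^{1/n}) dr` and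
`d_{n,0} = ∫₀^∞ ((1 + r^n)^{1/n} − r) dr`. -/
theorem stmt_9 (n : ℕ) (hn : 3 ≤ n) :
    ∃ C : ℝ, 0 < C ∧ ∀ a R : ℝ, 0 < a → a ≤ R →
      (∫ r in Set.Ioi (0:ℝ), (r - (max (r ^ n - a ^ n) 0) ^ ((1:ℝ)/n)))
        = a ^ 2 * ∫ r in Set.Ioi (0:ℝ), ((1 + r ^ n) ^ ((1:ℝ)/n) - r) ∧
      0 ≤ (∫ r in Set.Ioi (0:ℝ), (r - (max (r ^ n - a ^ n) 0) ^ ((1:ℝ)/n)))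
            - ∫ r in (0:ℝ)..R, (r - (max (r ^ n - a ^ n) 0) ^ ((1:ℝ)/n)) ∧
      (∫ r in Set.Ioi (0:ℝ), (r - (max (r ^ n - a ^ n) 0) ^ ((1:ℝ)/n)))
            - (∫ r in (0:ℝ)..R, (r - (max (r ^ n - a ^ n) 0) ^ ((1:ℝ)/n)))
        ≤ C * a ^ n / R ^ (n - 2) := by
  have hn0 : n ≠ 0 := by omega
  have hnR : (3:ℝ) ≤ (n:ℝ) := by exact_mod_cast hn
  refine ⟨((n:ℝ) - 2)⁻¹, by rw [inv_pos]; linarith, ?_⟩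
  intro a R ha haR
  have hR : 0 < R := lt_of_lt_of_le ha haR
  set f : ℝ → ℝ := fun r => r - (max (r ^ n - a ^ n) 0) ^ ((1:ℝ)/n) with hf
  have hint : IntegrableOn f (Set.Ioi 0) := integrableOn_Ioi hn ha
  -- split: ∫ Ioi 0 = ∫ Ioc 0 R + ∫ Ioi R
  have hsplit : (∫ r in Set.Ioi (0:ℝ), f r)
      = (∫ r in Set.Ioc (0:ℝ) R, f r) + ∫ r in Set.Ioi R, f r := by
    rw [← Set.Ioc_union_Ioi_eq_Ioi hR.le]
    exact setIntegral_union Set.Ioc_disjoint_Ioi_same measurableSet_Ioi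
      (hint.mono_set (by rw [← Set.Ioc_union_Ioi_eq_Ioi hR.le]; exact Set.subset_union_left))
      (hint.mono_set (Set.Ioi_subset_Ioi hR.le))
  have hival : (∫ r in (0:ℝ)..R, f r) = ∫ r in Set.Ioc (0:ℝ) R, f r :=
    intervalIntegral.integral_of_le hR.le
  have hdiff : (∫ r in Set.Ioi (0:ℝ), f r) - (∫ r in (0:ℝ)..R, f r)
      = ∫ r in Set.Ioi R, f r := by
    rw [hival, hsplit]; ring
  refine ⟨?_, ?_, ?_⟩
  · rw [show (∫ r in Set.Ioi (0:ℝ), f r)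
        = a ^ 2 * ∫ s in Set.Ioi (0:ℝ), (s - (max (s ^ n - 1) 0) ^ ((1:ℝ)/n)) from scale hn ha,
      fubini_key hn]
  · rw [hdiff]
    refine setIntegral_nonneg measurableSet_Ioi fun r hr => ?_
    exact nonneg hn0 ha.le (le_of_lt (lt_trans hR hr))
  · rw [hdiff]
    have hb : (∫ r in Set.Ioi R, f r)
        ≤ ∫ r in Set.Ioi R, a ^ n * r ^ ((1:ℝ) - n) := by
      refine setIntegral_mono_on (hint.mono_set (Set.Ioi_subset_Ioi hR.le))
        (integrable_bound hn a hR) measurableSet_Ioi fun r hr => ?_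
      exact bound hn0 ha.le (lt_trans hR hr)
    have hval : (∫ r in Set.Ioi R, a ^ n * r ^ ((1:ℝ) - n))
        = ((n:ℝ) - 2)⁻¹ * a ^ n / R ^ (n - 2) := by
      rw [integral_const_mul, integral_Ioi_rpow_of_lt (by linarith) hR]
      have h1 : ((1:ℝ) - n) + 1 = -((n:ℝ) - 2) := by ring
      rw [h1, Real.rpow_neg hR.le]
      have h2 : R ^ ((n:ℝ) - 2) = R ^ (n - 2 : ℕ) := by
        rw [← Real.rpow_natCast R (n - 2), Nat.cast_sub (by omega)]
        norm_num
      rw [h2, neg_div_neg_eq, div_eq_mul_inv, div_eq_mul_inv]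
      ring
    calc (∫ r in Set.Ioi R, f r) ≤ _ := hb
      _ = _ := hval
end

section
/- The Legendre transform (convex conjugate) of W_a equals W_a^*: for every p ∈ ℝⁿ, sup_{x ∈ ℝⁿ} (⟨p, x⟩ − W_a(x)) = W_a^*(p) = ∫₀^{|p|} max(s^n − a^n, 0)^{1/n} ds. -/
open Set intervalIntegral

section
variable {n : ℕ} {a : ℝ}

lemma fcont (hn : 2 ≤ n) (ha : 0 < a) :
    ContinuousOn (fun r : ℝ => (r ^ n + a ^ n) ^ ((1:ℝ)/n)) (Ici 0) := by
  apply ContinuousOn.rpow_const (by fun_prop)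
  intro r hr
  left
  have : (0:ℝ) ≤ r := hr
  positivity

lemma gcont (hn : 2 ≤ n) : Continuous (fun s : ℝ => (max (s ^ n - a ^ n) 0) ^ ((1:ℝ)/n)) := by
  apply Continuous.rpow_const (by fun_prop)
  intro s; right; positivity

lemma a_le_f (hn : 2 ≤ n) (ha : 0 < a) (r : ℝ) (hr : 0 ≤ r) :
    a ≤ (r ^ n + a ^ n) ^ ((1:ℝ)/n) := by
  have hne : n ≠ 0 := by omega
  have h : a = (a ^ n) ^ ((1:ℝ)/n) := by
    rw [one_div, Real.pow_rpow_inv_natCast ha.le hne]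
  nth_rewrite 1 [h]
  exact Real.rpow_le_rpow (by positivity) (by nlinarith [pow_nonneg hr n]) (by positivity)

lemma f_mono (hn : 2 ≤ n) (ha : 0 < a) {r s : ℝ} (hr : 0 ≤ r) (hrs : r ≤ s) :
    (r ^ n + a ^ n) ^ ((1:ℝ)/n) ≤ (s ^ n + a ^ n) ^ ((1:ℝ)/n) := by
  exact Real.rpow_le_rpow (by positivity) (by nlinarith [pow_le_pow_left₀ hr hrs n]) (by positivity)

lemma g_nonneg (s : ℝ) : 0 ≤ (max (s ^ n - a ^ n) 0) ^ ((1:ℝ)/n) :=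
  Real.rpow_nonneg (le_max_right _ _) _

-- f (g b) = b for a ≤ b
lemma f_g (hn : 2 ≤ n) (ha : 0 < a) {b : ℝ} (hb : a ≤ b) :
    ((max (b ^ n - a ^ n) 0) ^ ((1:ℝ)/n)) ^ n + a ^ n = b ^ n := by
  have hne : n ≠ 0 := by omega
  have h1 : max (b ^ n - a ^ n) 0 = b ^ n - a ^ n := by
    rw [max_eq_left]
    nlinarith [pow_le_pow_left₀ ha.le hb n]
  rw [h1, one_div, Real.rpow_inv_natCast_pow (by nlinarith [pow_le_pow_left₀ ha.le hb n]) hne]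
  ring

-- g b = 0 for b ≤ a
lemma g_eq_zero (hn : 2 ≤ n) (ha : 0 < a) {b : ℝ} (hb0 : 0 ≤ b) (hb : b ≤ a) :
    (max (b ^ n - a ^ n) 0) ^ ((1:ℝ)/n) = 0 := by
  have h1 : max (b ^ n - a ^ n) 0 = 0 := by
    rw [max_eq_right]
    nlinarith [pow_le_pow_left₀ hb0 hb n]
  rw [h1, Real.zero_rpow (by positivity)]

end

section
variable {n : ℕ} {a : ℝ}

lemma key_eq (hn : 2 ≤ n) (ha : 0 < a) (b : ℝ) (hb : 0 ≤ b) :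
    b * ((max (b ^ n - a ^ n) 0) ^ ((1:ℝ)/n))
      - (∫ r in (0:ℝ)..((max (b ^ n - a ^ n) 0) ^ ((1:ℝ)/n)), (r ^ n + a ^ n) ^ ((1:ℝ)/n))
      = ∫ s in (0:ℝ)..b, (max (s ^ n - a ^ n) 0) ^ ((1:ℝ)/n) := by
  have hne : n ≠ 0 := by omega
  set f : ℝ → ℝ := fun r => (r ^ n + a ^ n) ^ ((1:ℝ)/n) with hf
  set g : ℝ → ℝ := fun s => (max (s ^ n - a ^ n) 0) ^ ((1:ℝ)/n) with hg
  rcases le_or_gt b a with hba | hab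
  · -- easy case : both sides zero
    have h0 : g b = 0 := g_eq_zero hn ha hb hba
    have hR : ∫ s in (0:ℝ)..b, g s = 0 := by
      rw [intervalIntegral.integral_congr (g := fun _ => (0:ℝ))
        (fun s hs => by
          rw [uIcc_of_le hb] at hs
          exact g_eq_zero hn ha hs.1 (hs.2.trans hba))]
      simp
    show b * g b - (∫ r in (0:ℝ)..g b, f r) = ∫ s in (0:ℝ)..b, g s
    rw [h0, hR]; simp
  · -- main case
    have hab' : a ≤ b := hab.le
    have ht0 : 0 ≤ g b := g_nonneg b
    have htn : (g b) ^ n + a ^ n = b ^ n := f_g hn ha hab'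
    have hfg : f (g b) = b := by
      show ((g b) ^ n + a ^ n) ^ ((1:ℝ)/n) = b
      rw [htn, one_div, Real.pow_rpow_inv_natCast hb hne]
    have hf0 : f 0 = a := by
      show ((0:ℝ) ^ n + a ^ n) ^ ((1:ℝ)/n) = a
      rw [zero_pow hne, zero_add, one_div, Real.pow_rpow_inv_natCast ha.le hne]
    set f' : ℝ → ℝ := fun r => (1/(n:ℝ) * (r ^ n + a ^ n) ^ ((1:ℝ)/n - 1)) * ((n:ℝ) * r ^ (n-1))
      with hf'
    have hderiv : ∀ r ∈ uIcc (0:ℝ) (g b), HasDerivAt f (f' r) r := by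
      intro r hr
      rw [uIcc_of_le ht0] at hr
      have hbase : r ^ n + a ^ n ≠ 0 :=
        ne_of_gt (by nlinarith [pow_nonneg hr.1 n, pow_pos ha n])
      have h1 : HasDerivAt (fun r : ℝ => r ^ n + a ^ n) ((n:ℝ) * r ^ (n-1)) r :=
        (hasDerivAt_pow n r).add_const _
      exact (Real.hasDerivAt_rpow_const (p := (1:ℝ)/n) (Or.inl hbase)).comp r h1
    have hf'cont : ContinuousOn f' (uIcc (0:ℝ) (g b)) := by
      rw [uIcc_of_le ht0]
      apply ContinuousOn.mul
      · apply ContinuousOn.mul continuousOn_const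
        apply ContinuousOn.rpow_const (by fun_prop)
        intro r hr
        exact Or.inl (ne_of_gt (by nlinarith [pow_nonneg hr.1 n, pow_pos ha n]))
      · fun_prop
    have hgc : Continuous g := gcont hn
    have hsub : ∫ r in (0:ℝ)..(g b), f' r • g (f r) = ∫ s in (f 0)..(f (g b)), g s :=
      intervalIntegral.integral_comp_smul_deriv hderiv hf'cont hgc
    have hgf : ∀ r ∈ uIcc (0:ℝ) (g b), f' r • g (f r) = r * f' r := by
      intro r hr
      rw [uIcc_of_le ht0] at hr
      have hr0 : (0:ℝ) ≤ r := hr.1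
      have h1 : (f r) ^ n = r ^ n + a ^ n := by
        show (((r ^ n + a ^ n)) ^ ((1:ℝ)/n)) ^ n = _
        rw [one_div, Real.rpow_inv_natCast_pow (add_nonneg (pow_nonneg hr0 n) (pow_nonneg ha.le n)) hne]
      have h2 : g (f r) = r := by
        show (max ((f r) ^ n - a ^ n) 0) ^ ((1:ℝ)/n) = r
        rw [h1]
        have : max (r ^ n + a ^ n - a ^ n) 0 = r ^ n := by
          rw [max_eq_left (by nlinarith [pow_nonneg hr0 n])]; ring
        rw [this, one_div, Real.pow_rpow_inv_natCast hr0 hne]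
      rw [h2, smul_eq_mul, mul_comm]
    have hparts : ∫ r in (0:ℝ)..(g b), r * f' r
        = (g b) * f (g b) - 0 * f 0 - ∫ r in (0:ℝ)..(g b), 1 * f r := by
      apply intervalIntegral.integral_mul_deriv_eq_deriv_mul
        (fun x _ => hasDerivAt_id x) hderiv
      · exact intervalIntegrable_const
      · exact hf'cont.intervalIntegrable
    have hIab : ∫ s in (f 0)..(f (g b)), g s = ∫ s in a..b, g s := by rw [hf0, hfg]
    have hsplit : (∫ s in (0:ℝ)..a, g s) + (∫ s in a..b, g s) = ∫ s in (0:ℝ)..b, g s :=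
      intervalIntegral.integral_add_adjacent_intervals
        (hgc.intervalIntegrable _ _) (hgc.intervalIntegrable _ _)
    have h0a : (∫ s in (0:ℝ)..a, g s) = 0 := by
      rw [intervalIntegral.integral_congr (g := fun _ => (0:ℝ))
        (fun s hs => by
          rw [uIcc_of_le ha.le] at hs
          exact g_eq_zero hn ha hs.1 hs.2)]
      simp
    have hcongr : ∫ r in (0:ℝ)..(g b), f' r • g (f r) = ∫ r in (0:ℝ)..(g b), r * f' r :=
      intervalIntegral.integral_congr hgf
    show b * g b - (∫ r in (0:ℝ)..g b, f r) = ∫ s in (0:ℝ)..b, g s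
    rw [← hsplit, h0a, zero_add, ← hIab, ← hsub, hcongr, hparts, hfg]
    simp [mul_comm]

section
variable {n : ℕ} {a : ℝ}

lemma f_gb (hn : 2 ≤ n) (ha : 0 < a) {b : ℝ} (hab : a ≤ b) :
    ((((max (b ^ n - a ^ n) 0) ^ ((1:ℝ)/n)) ^ n + a ^ n)) ^ ((1:ℝ)/n) = b := by
  rw [f_g hn ha hab, one_div,
    Real.pow_rpow_inv_natCast (ha.le.trans hab) (by omega)]

lemma f_intble (hn : 2 ≤ n) (ha : 0 < a) {u v : ℝ} (hu : 0 ≤ u) (hv : 0 ≤ v) :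
    IntervalIntegrable (fun r : ℝ => (r ^ n + a ^ n) ^ ((1:ℝ)/n)) MeasureTheory.volume u v :=
  ((fcont hn ha).mono (fun x hx => le_trans (le_min hu hv) hx.1)).intervalIntegrable

lemma oneD (hn : 2 ≤ n) (ha : 0 < a) {b : ℝ} (hb : 0 ≤ b) {t : ℝ} (ht : 0 ≤ t) :
    b * t - (∫ r in (0:ℝ)..t, (r ^ n + a ^ n) ^ ((1:ℝ)/n))
      ≤ ∫ s in (0:ℝ)..b, (max (s ^ n - a ^ n) 0) ^ ((1:ℝ)/n) := by
  rw [← key_eq hn ha b hb]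
  set f : ℝ → ℝ := fun r => (r ^ n + a ^ n) ^ ((1:ℝ)/n) with hf
  set T : ℝ := (max (b ^ n - a ^ n) 0) ^ ((1:ℝ)/n) with hT
  have hT0 : 0 ≤ T := Real.rpow_nonneg (le_max_right _ _) _
  have hint : ∀ u v : ℝ, 0 ≤ u → 0 ≤ v → IntervalIntegrable f MeasureTheory.volume u v :=
    fun u v hu hv => f_intble hn ha hu hv
  have hsub : (∫ r in (0:ℝ)..t, f r) - (∫ r in (0:ℝ)..T, f r) = ∫ r in T..t, f r :=
    intervalIntegral.integral_interval_sub_left (hint 0 t le_rfl ht) (hint 0 T le_rfl hT0)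
  have hkey : b * (t - T) ≤ ∫ r in T..t, f r := by
    rcases le_total T t with hTt | htT
    · have hpt : ∀ r ∈ Set.Icc T t, b ≤ f r := by
        intro r hr
        rcases le_or_gt b a with hba | hab
        · exact hba.trans (a_le_f hn ha r (hT0.trans hr.1))
        · have hfT : f T = b := f_gb hn ha hab.le
          exact hfT ▸ f_mono hn ha hT0 hr.1
      have h1 : ∫ _ in T..t, b ≤ ∫ r in T..t, f r :=
        intervalIntegral.integral_mono_on hTt intervalIntegrable_const
          (hint T t hT0 ht) hpt
      rw [intervalIntegral.integral_const, smul_eq_mul] at h1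
      nlinarith
    · -- t ≤ T; then b > a necessarily unless T = 0
      rcases le_or_gt T 0 with hT0' | hTpos
      · have : T = 0 := le_antisymm hT0' hT0
        rw [this] at htT ⊢
        have : t = 0 := le_antisymm htT ht
        simp [this]
      · have hab : a < b := by
          by_contra hba
          push_neg at hba
          have := g_eq_zero hn ha hb hba
          rw [← hT] at this
          exact absurd this (ne_of_gt hTpos)
        have hpt : ∀ r ∈ Set.Icc t T, f r ≤ b := by
          intro r hr
          have hfT : f T = b := f_gb hn ha hab.le
          exact hfT ▸ f_mono hn ha (ht.trans hr.1) hr.2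
        have h1 : ∫ r in t..T, f r ≤ ∫ _ in t..T, b :=
          intervalIntegral.integral_mono_on htT (hint t T ht hT0)
            intervalIntegrable_const hpt
        rw [intervalIntegral.integral_const, smul_eq_mul] at h1
        rw [intervalIntegral.integral_symm]
        nlinarith
  have hring : b * (t - T) = b * t - b * T := by ring
  linarith

end

open RealInnerProductSpace

/-- The Legendre transform of `W_a` equals `W_a^*`:
`sup_x (⟨p, x⟩ − W_a(x)) = W_a^*(p)`. -/
theorem stmt_13 (n : ℕ) (hn : 2 ≤ n) (a : ℝ) (ha : 0 < a)
    (p : EuclideanSpace ℝ (Fin n)) :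
    (⨆ x : EuclideanSpace ℝ (Fin n),
        (⟪p, x⟫ - ∫ r in (0:ℝ)..‖x‖, (r ^ n + a ^ n) ^ ((1:ℝ)/n))) =
      ∫ s in (0:ℝ)..‖p‖, (max (s ^ n - a ^ n) 0) ^ ((1:ℝ)/n) := by
  have hb : (0:ℝ) ≤ ‖p‖ := norm_nonneg p
  set V : ℝ := ∫ s in (0:ℝ)..‖p‖, (max (s ^ n - a ^ n) 0) ^ ((1:ℝ)/n) with hV
  set φ : EuclideanSpace ℝ (Fin n) → ℝ :=
    fun x => ⟪p, x⟫ - ∫ r in (0:ℝ)..‖x‖, (r ^ n + a ^ n) ^ ((1:ℝ)/n) with hφ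
  have hub : ∀ x, φ x ≤ V := by
    intro x
    have h1 : ⟪p, x⟫ ≤ ‖p‖ * ‖x‖ := real_inner_le_norm p x
    have h2 := oneD hn ha hb (norm_nonneg x)
    calc φ x ≤ ‖p‖ * ‖x‖ - ∫ r in (0:ℝ)..‖x‖, (r ^ n + a ^ n) ^ ((1:ℝ)/n) := by
          simp only [hφ]; linarith
      _ ≤ V := h2
  have hbdd : BddAbove (Set.range φ) := ⟨V, fun y hy => by
    obtain ⟨x, rfl⟩ := hy; exact hub x⟩
  apply le_antisymm (ciSup_le hub)
  -- attainment
  rcases eq_or_lt_of_le hb with hp0 | hppos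
  · have hpz : p = 0 := by simpa using hp0.symm
    have hx0 : φ 0 = V := by
      simp only [hφ, hV, hpz, ← hp0]
      simp
    exact hx0 ▸ le_ciSup hbdd 0
  · set T : ℝ := (max (‖p‖ ^ n - a ^ n) 0) ^ ((1:ℝ)/n) with hT
    have hT0 : 0 ≤ T := Real.rpow_nonneg (le_max_right _ _) _
    set x0 : EuclideanSpace ℝ (Fin n) := (T / ‖p‖) • p with hx0
    have hnx0 : ‖x0‖ = T := by
      rw [hx0, norm_smul, Real.norm_eq_abs, abs_div, abs_of_nonneg hT0,
        abs_of_pos hppos, div_mul_cancel₀ _ (ne_of_gt hppos)]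
    have hinner : ⟪p, x0⟫ = ‖p‖ * T := by
      rw [hx0, real_inner_smul_right, real_inner_self_eq_norm_sq]
      field_simp
    have hφx0 : φ x0 = V := by
      rw [hφ]
      simp only
      rw [hnx0, hinner, hV, hT]
      exact key_eq hn ha ‖p‖ hb
    exact hφx0 ▸ le_ciSup hbdd x0
end
end

section
/- Let Ω ⊂ ℝⁿ be bounded and convex, let u, φ : closure(Ω) → ℝ be continuous convex functions with u = φ on ∂Ω and u ≥ φ on Ω. Then the subgradient image ∂u(Ω) is contained in ∂φ(Ω). -/
open RealInnerProductSpace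

/-!
Both subgradient conditions say that a point maximises `y ↦ ⟪p, y⟫ - w y`. If `p ∈ ∂u(x)`, then
`⟪p, ·⟫ - u` is maximal at `x`. The function `⟪p, ·⟫ - φ` attains its maximum on the compact set
`closure Ω`; on `∂Ω` it agrees with `⟪p, ·⟫ - u`, so it is bounded there by
`⟪p, x⟫ - u x ≤ ⟪p, x⟫ - φ x`. Hence a maximiser can be taken inside `Ω`, and there `p ∈ ∂φ`.
-/

theorem subgradient_iff_isMaxOn {E : Type*} [NormedAddCommGroup E] [InnerProductSpace ℝ E]
    {s : Set E} {w : E → ℝ} {x p : E} :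
    (∀ y ∈ s, w x + ⟪p, y - x⟫ ≤ w y) ↔ IsMaxOn (fun y => ⟪p, y⟫ - w y) s x := by
  rw [isMaxOn_iff]
  refine forall₂_congr fun y _ => ?_
  rw [inner_sub_right]
  constructor <;> intro h <;> linarith

theorem exists_mem_isMaxOn_closure_of_frontier_le {X : Type*} [TopologicalSpace X] {s : Set X}
    {f : X → ℝ} {x : X} (hs : IsCompact (closure s)) (hf : ContinuousOn f (closure s))
    (hx : x ∈ s) (hfr : ∀ y ∈ frontier s, f y ≤ f x) :
    ∃ z ∈ s, IsMaxOn f (closure s) z := by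
  obtain ⟨z, hz, hmax⟩ := hs.exists_isMaxOn ⟨x, subset_closure hx⟩ hf
  by_cases hzs : z ∈ s
  · exact ⟨z, hzs, hmax⟩
  · have hz_fr : z ∈ frontier s := ⟨hz, fun hi => hzs (interior_subset hi)⟩
    exact ⟨x, hx, fun y hy => (hmax hy).trans (hfr z hz_fr)⟩

theorem stmt_16_general (n : ℕ) (Ω : Set (EuclideanSpace ℝ (Fin n)))
    (hΩbd : Bornology.IsBounded Ω)
    (u φ : EuclideanSpace ℝ (Fin n) → ℝ)
    (hu_cont : ContinuousOn u (closure Ω)) (hφ_cont : ContinuousOn φ (closure Ω))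
    (hbdry : ∀ x ∈ frontier Ω, u x = φ x)
    (hge : ∀ x ∈ Ω, φ x ≤ u x) :
    ∀ x ∈ Ω, ∀ p : EuclideanSpace ℝ (Fin n),
      (∀ y ∈ Ω, u x + ⟪p, y - x⟫ ≤ u y) →
      ∃ x' ∈ Ω, ∀ y ∈ Ω, φ x' + ⟪p, y - x'⟫ ≤ φ y := by
  intro x hx p hp
  have hp_cont : Continuous fun y : EuclideanSpace ℝ (Fin n) => ⟪p, y⟫ := by fun_prop
  have hu_max : IsMaxOn (fun y => ⟪p, y⟫ - u y) (closure Ω) x :=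
    (subgradient_iff_isMaxOn.mp hp).closure (hp_cont.continuousOn.sub hu_cont)
  have hfr : ∀ y ∈ frontier Ω, ⟪p, y⟫ - φ y ≤ ⟪p, x⟫ - φ x := fun y hy => by
    have := isMaxOn_iff.mp hu_max y (frontier_subset_closure hy)
    rw [hbdry y hy] at this
    linarith [hge x hx]
  obtain ⟨z, hz, hz_max⟩ := exists_mem_isMaxOn_closure_of_frontier_le hΩbd.isCompact_closure
    (hp_cont.continuousOn.sub hφ_cont) hx hfr
  exact ⟨z, hz, subgradient_iff_isMaxOn.mpr (hz_max.on_subset subset_closure)⟩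

/-- If `u, φ` are continuous convex functions on a bounded convex domain `Ω`,
equal on `∂Ω` with `u ≥ φ` in `Ω`, then the subgradient image `∂u(Ω)` is
contained in `∂φ(Ω)`. -/
theorem stmt_16 (n : ℕ) (Ω : Set (EuclideanSpace ℝ (Fin n)))
    (hΩopen : IsOpen Ω) (hΩconv : Convex ℝ Ω) (hΩbd : Bornology.IsBounded Ω)
    (u φ : EuclideanSpace ℝ (Fin n) → ℝ)
    (hu_cont : ContinuousOn u (closure Ω)) (hφ_cont : ContinuousOn φ (closure Ω))
    (hu_conv : ConvexOn ℝ Ω u) (hφ_conv : ConvexOn ℝ Ω φ)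
    (hbdry : ∀ x ∈ frontier Ω, u x = φ x)
    (hge : ∀ x ∈ Ω, φ x ≤ u x) :
    ∀ x ∈ Ω, ∀ p : EuclideanSpace ℝ (Fin n),
      (∀ y ∈ Ω, u x + ⟪p, y - x⟫ ≤ u y) →
      ∃ x' ∈ Ω, ∀ y ∈ Ω, φ x' + ⟪p, y - x'⟫ ≤ φ y :=
  stmt_16_general n Ω hΩbd u φ hu_cont hφ_cont hbdry hge
end

section
/- For n ≥ 3 and a > 0, lim_{|x|→∞} (W_a(x) + W_a^*(x) − |x|²) = 0. -/
open Filter Real MeasureTheory intervalIntegral Set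


private lemma bern {n : ℕ} (hn : 2 ≤ n) {x y : ℝ} (hx : 0 ≤ x) (hxy : x ≤ y) :
    (n:ℝ) * x ^ (n-1) * (y - x) ≤ y ^ n - x ^ n := by
  rcases eq_or_lt_of_le hx with h | h
  · rw [← h]
    have : (0:ℝ) ≤ y ^ n := pow_nonneg (by linarith) n
    simp [zero_pow (by omega : n - 1 ≠ 0), zero_pow (by omega : n ≠ 0), this]
  · have hd : (0:ℝ) ≤ (y - x)/x := div_nonneg (by linarith) h.le
    have h1 : (1:ℝ) + n * ((y - x)/x) ≤ (1 + (y-x)/x) ^ n :=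
      one_add_mul_le_pow (by linarith) n
    have heq : (1:ℝ) + (y - x)/x = y / x := by field_simp; ring
    rw [heq] at h1
    have h2 : (1 + (n:ℝ) * ((y - x)/x)) * x ^ n ≤ (y/x) ^ n * x ^ n :=
      mul_le_mul_of_nonneg_right h1 (by positivity)
    have h3 : (y/x) ^ n * x ^ n = y ^ n := by
      rw [div_pow, div_mul_cancel₀ _ (pow_ne_zero n h.ne')]
    have hxn : x ^ (n-1) * x = x ^ n := by
      rw [← pow_succ]; congr 1; omega
    have h4 : (1 + (n:ℝ) * ((y - x)/x)) * x ^ n = x ^ n + (n:ℝ) * x ^ (n-1) * (y - x) := by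
      field_simp
      rw [← hxn]; ring
    rw [h3, h4] at h2
    linarith

private lemma key {n : ℕ} (hn : 3 ≤ n) {a : ℝ} (ha : 0 < a) :
    Tendsto (fun R : ℝ =>
      (∫ r in (0:ℝ)..R, (r ^ n + a ^ n) ^ ((n:ℝ)⁻¹)) +
      (∫ r in (0:ℝ)..R, (max (r ^ n - a ^ n) 0) ^ ((n:ℝ)⁻¹)) - R ^ 2) atTop (nhds 0) := by
  have hnn : n ≠ 0 := by omega
  have hn0 : (0:ℝ) < n := by positivity
  -- continuity of the integrands
  have hfc : Continuous fun r : ℝ => (r ^ n + a ^ n) ^ ((n:ℝ)⁻¹) := by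
    apply Continuous.rpow_const (by continuity)
    intro x; right; positivity
  have hgc : Continuous fun r : ℝ => (max (r ^ n - a ^ n) 0) ^ ((n:ℝ)⁻¹) := by
    apply Continuous.rpow_const (by continuity)
    intro x; right; positivity
  -- FTC for the primitive of f
  have hW : ∀ u : ℝ, HasDerivAt (fun v : ℝ => ∫ r in (0:ℝ)..v, (r ^ n + a ^ n) ^ ((n:ℝ)⁻¹))
      ((u ^ n + a ^ n) ^ ((n:ℝ)⁻¹)) u := fun u =>
    intervalIntegral.integral_hasDerivAt_right (hfc.intervalIntegrable _ _)
      (hfc.stronglyMeasurableAtFilter _ _) hfc.continuousAt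
  -- the core bounds
  have core : ∀ R : ℝ, a + 1 ≤ R →
      -((a^n / ((n:ℝ) * (R-a)^(n-1))) * (a^n / ((n:ℝ) * (R-a)^(n-1)))) ≤
        (∫ r in (0:ℝ)..R, (r ^ n + a ^ n) ^ ((n:ℝ)⁻¹)) +
        (∫ r in (0:ℝ)..R, (max (r ^ n - a ^ n) 0) ^ ((n:ℝ)⁻¹)) - R ^ 2 ∧
      (∫ r in (0:ℝ)..R, (r ^ n + a ^ n) ^ ((n:ℝ)⁻¹)) +
        (∫ r in (0:ℝ)..R, (max (r ^ n - a ^ n) 0) ^ ((n:ℝ)⁻¹)) - R ^ 2 ≤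
        (a^n / ((n:ℝ) * (R-a)^(n-1))) * (a^n / ((n:ℝ) * R^(n-1))) := by
    intro R hR
    have haR : a ≤ R := by linarith
    have hR0 : (0:ℝ) < R := lt_of_lt_of_le ha haR
    set T : ℝ := (R ^ n - a ^ n) ^ ((n:ℝ)⁻¹) with hTdef
    have hRa : (0:ℝ) ≤ R ^ n - a ^ n := sub_nonneg.2 (pow_le_pow_left₀ ha.le haR n)
    have hT0 : 0 ≤ T := rpow_nonneg hRa _
    have hTn : T ^ n = R ^ n - a ^ n := Real.rpow_inv_natCast_pow hRa hnn
    have hTR : T ≤ R := by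
      calc T ≤ (R ^ n) ^ ((n:ℝ)⁻¹) :=
            Real.rpow_le_rpow hRa (by linarith [pow_nonneg ha.le n]) (by positivity)
        _ = R := Real.pow_rpow_inv_natCast hR0.le hnn
    have hTge : R - a ≤ T := by
      have h1 : (R-a) ^ n ≤ R ^ n - a ^ n := by
        have h2 := pow_add_pow_le (by linarith : (0:ℝ) ≤ R - a) ha.le hnn
        rw [sub_add_cancel] at h2
        linarith
      calc R - a = ((R-a) ^ n) ^ ((n:ℝ)⁻¹) :=
            (Real.pow_rpow_inv_natCast (by linarith) hnn).symm
        _ ≤ T := Real.rpow_le_rpow (pow_nonneg (by linarith) n) h1 (by positivity)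
    -- integral of g on [0,a] is zero
    have hg0a : (∫ r in (0:ℝ)..a, (max (r ^ n - a ^ n) 0) ^ ((n:ℝ)⁻¹)) = 0 := by
      rw [intervalIntegral.integral_congr (g := fun _ => (0:ℝ)), intervalIntegral.integral_zero]
      intro r hr
      rw [uIcc_of_le ha.le] at hr
      have h1 : r ^ n ≤ a ^ n := pow_le_pow_left₀ hr.1 hr.2 n
      simp only [max_eq_right (by linarith : r ^ n - a ^ n ≤ 0)]
      exact Real.zero_rpow (by positivity)
    -- FTC on [a, R]
    have hFTC : (∫ r in a..R, (max (r ^ n - a ^ n) 0) ^ ((n:ℝ)⁻¹)) =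
        R * T - ∫ t in (0:ℝ)..T, (t ^ n + a ^ n) ^ ((n:ℝ)⁻¹) := by
      have hτc : Continuous fun r : ℝ => (r ^ n - a ^ n) ^ ((n:ℝ)⁻¹) := by
        apply Continuous.rpow_const (by continuity)
        intro x; right; positivity
      have hWc : Continuous fun v : ℝ => ∫ r in (0:ℝ)..v, (r ^ n + a ^ n) ^ ((n:ℝ)⁻¹) :=
        continuous_iff_continuousAt.2 fun u => (hW u).continuousAt
      have heval := intervalIntegral.integral_eq_sub_of_hasDeriv_right_of_le haR
        (f := fun r : ℝ => r * (r ^ n - a ^ n) ^ ((n:ℝ)⁻¹) -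
          ∫ t in (0:ℝ)..((r ^ n - a ^ n) ^ ((n:ℝ)⁻¹)), (t ^ n + a ^ n) ^ ((n:ℝ)⁻¹))
        (f' := fun r : ℝ => (max (r ^ n - a ^ n) 0) ^ ((n:ℝ)⁻¹))
        (((continuous_id.mul hτc).sub (hWc.comp hτc)).continuousOn)
        ?_ ((hgc.intervalIntegrable _ _))
      · rw [heval]
        have hz : ((0:ℝ)) ^ ((n:ℝ)⁻¹) = 0 := Real.zero_rpow (by positivity)
        simp only [sub_self, hz, mul_zero, intervalIntegral.integral_same, sub_zero]
        rw [hTdef]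
      · intro r hr
        have har : a < r := hr.1
        have hr0 : (0:ℝ) < r := lt_trans ha har
        have hu : (0:ℝ) < r ^ n - a ^ n := sub_pos.2 (pow_lt_pow_left₀ har ha.le hnn)
        have hτ : HasDerivAt (fun s : ℝ => (s ^ n - a ^ n) ^ ((n:ℝ)⁻¹))
            (((n:ℝ)⁻¹ * (r ^ n - a ^ n) ^ ((n:ℝ)⁻¹ - 1)) * ((n:ℝ) * r ^ (n-1))) r := by
          have h1 := Real.hasDerivAt_rpow_const (x := r ^ n - a ^ n) (p := (n:ℝ)⁻¹) (Or.inl hu.ne')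
          have h2 : HasDerivAt (fun s : ℝ => s ^ n - a ^ n) ((n:ℝ) * r ^ (n-1)) r :=
            (hasDerivAt_pow n r).sub_const _
          exact h1.comp r h2
        have hfτ : (((r ^ n - a ^ n) ^ ((n:ℝ)⁻¹)) ^ n + a ^ n) ^ ((n:ℝ)⁻¹) = r := by
          rw [Real.rpow_inv_natCast_pow hu.le hnn, sub_add_cancel,
            Real.pow_rpow_inv_natCast hr0.le hnn]
        have hF : HasDerivAt (fun s : ℝ => s * (s ^ n - a ^ n) ^ ((n:ℝ)⁻¹) -
            ∫ t in (0:ℝ)..((s ^ n - a ^ n) ^ ((n:ℝ)⁻¹)), (t ^ n + a ^ n) ^ ((n:ℝ)⁻¹))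
            ((1 * (r ^ n - a ^ n) ^ ((n:ℝ)⁻¹) +
              r * (((n:ℝ)⁻¹ * (r ^ n - a ^ n) ^ ((n:ℝ)⁻¹ - 1)) * ((n:ℝ) * r ^ (n-1)))) -
             ((((r ^ n - a ^ n) ^ ((n:ℝ)⁻¹)) ^ n + a ^ n) ^ ((n:ℝ)⁻¹) *
              (((n:ℝ)⁻¹ * (r ^ n - a ^ n) ^ ((n:ℝ)⁻¹ - 1)) * ((n:ℝ) * r ^ (n-1))))) r :=
          ((hasDerivAt_id r).mul hτ).sub ((hW _).comp r hτ)
        rw [hfτ] at hF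
        have hval : (max (r ^ n - a ^ n) 0) ^ ((n:ℝ)⁻¹) =
            (1 * (r ^ n - a ^ n) ^ ((n:ℝ)⁻¹) +
              r * (((n:ℝ)⁻¹ * (r ^ n - a ^ n) ^ ((n:ℝ)⁻¹ - 1)) * ((n:ℝ) * r ^ (n-1)))) -
             (r * (((n:ℝ)⁻¹ * (r ^ n - a ^ n) ^ ((n:ℝ)⁻¹ - 1)) * ((n:ℝ) * r ^ (n-1)))) := by
          rw [max_eq_left hu.le]; ring
        rw [← hval] at hF
        exact hF.hasDerivWithinAt
    -- combine integrals of g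
    have hA : (∫ r in (0:ℝ)..R, (max (r ^ n - a ^ n) 0) ^ ((n:ℝ)⁻¹)) =
        R * T - ∫ t in (0:ℝ)..T, (t ^ n + a ^ n) ^ ((n:ℝ)⁻¹) := by
      rw [← intervalIntegral.integral_add_adjacent_intervals
        (hgc.intervalIntegrable (0:ℝ) a) (hgc.intervalIntegrable a R), hg0a, hFTC, zero_add]
    -- split integral of f
    have hsplit : (∫ r in (0:ℝ)..R, (r ^ n + a ^ n) ^ ((n:ℝ)⁻¹)) =
        (∫ t in (0:ℝ)..T, (t ^ n + a ^ n) ^ ((n:ℝ)⁻¹)) +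
        (∫ r in T..R, (r ^ n + a ^ n) ^ ((n:ℝ)⁻¹)) :=
      (intervalIntegral.integral_add_adjacent_intervals
        (hfc.intervalIntegrable (0:ℝ) T) (hfc.intervalIntegrable T R)).symm
    -- expression identity
    have hE : (∫ r in (0:ℝ)..R, (r ^ n + a ^ n) ^ ((n:ℝ)⁻¹)) +
        (∫ r in (0:ℝ)..R, (max (r ^ n - a ^ n) 0) ^ ((n:ℝ)⁻¹)) - R ^ 2 =
        (∫ r in T..R, (r ^ n + a ^ n) ^ ((n:ℝ)⁻¹)) + R * T - R ^ 2 := by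
      rw [hA, hsplit]; ring
    -- bounds on the middle integral
    have hlow : (R ^ 2 - T ^ 2)/2 ≤ ∫ r in T..R, (r ^ n + a ^ n) ^ ((n:ℝ)⁻¹) := by
      have h1 : ∀ r ∈ Icc T R, r ≤ (r ^ n + a ^ n) ^ ((n:ℝ)⁻¹) := by
        intro r hrr
        have hr0 : (0:ℝ) ≤ r := le_trans hT0 hrr.1
        calc r = (r ^ n) ^ ((n:ℝ)⁻¹) := (Real.pow_rpow_inv_natCast hr0 hnn).symm
          _ ≤ (r ^ n + a ^ n) ^ ((n:ℝ)⁻¹) :=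
            Real.rpow_le_rpow (pow_nonneg hr0 n) (by linarith [pow_nonneg ha.le n]) (by positivity)
      have h2 := intervalIntegral.integral_mono_on (μ := volume) hTR
        (continuous_id.intervalIntegrable T R) (hfc.intervalIntegrable T R) h1
      simp only [id] at h2
      rwa [integral_id] at h2
    have hB0 : (0:ℝ) ≤ R ^ n + a ^ n := by positivity
    have hup : (∫ r in T..R, (r ^ n + a ^ n) ^ ((n:ℝ)⁻¹)) ≤
        (R - T) * ((R ^ n + a ^ n) ^ ((n:ℝ)⁻¹)) := by
      have h1 : ∀ r ∈ Icc T R, (r ^ n + a ^ n) ^ ((n:ℝ)⁻¹) ≤ (R ^ n + a ^ n) ^ ((n:ℝ)⁻¹) := by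
        intro r hrr
        exact Real.rpow_le_rpow (add_nonneg (pow_nonneg (le_trans hT0 hrr.1) n) (by positivity))
          (add_le_add_left (pow_le_pow_left₀ (le_trans hT0 hrr.1) hrr.2 n) _) (by positivity)
      have h2 := intervalIntegral.integral_mono_on (μ := volume) hTR (hfc.intervalIntegrable T R)
        (intervalIntegrable_const) h1
      rwa [intervalIntegral.integral_const, smul_eq_mul] at h2
    -- Bernoulli consequences
    set B : ℝ := (R ^ n + a ^ n) ^ ((n:ℝ)⁻¹) with hBdef
    have hBn : B ^ n = R ^ n + a ^ n := Real.rpow_inv_natCast_pow hB0 hnn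
    have hRB : R ≤ B := by
      calc R = (R ^ n) ^ ((n:ℝ)⁻¹) := (Real.pow_rpow_inv_natCast hR0.le hnn).symm
        _ ≤ B := Real.rpow_le_rpow (by positivity) (by linarith [pow_nonneg ha.le n]) (by positivity)
    have hbT : (n:ℝ) * T ^ (n-1) * (R - T) ≤ a ^ n := by
      have := bern (by omega : 2 ≤ n) hT0 hTR
      rw [hTn] at this
      linarith
    have hbB : (n:ℝ) * R ^ (n-1) * (B - R) ≤ a ^ n := by
      have := bern (by omega : 2 ≤ n) hR0.le hRB
      rw [hBn] at this
      linarith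
    -- δ and ε bounds
    have hden1 : (0:ℝ) < (n:ℝ) * (R-a)^(n-1) := by
      have : (0:ℝ) < R - a := by linarith
      positivity
    have hden2 : (0:ℝ) < (n:ℝ) * R^(n-1) := by positivity
    have hδb : R - T ≤ a ^ n / ((n:ℝ) * (R-a)^(n-1)) := by
      rw [le_div_iff₀ hden1]
      have h1 : (R-a) ^ (n-1) ≤ T ^ (n-1) := pow_le_pow_left₀ (by linarith) hTge _
      have h2 : (n:ℝ) * (R-a)^(n-1) * (R - T) ≤ (n:ℝ) * T ^ (n-1) * (R - T) := by
        apply mul_le_mul_of_nonneg_right _ (by linarith)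
        exact mul_le_mul_of_nonneg_left h1 (by positivity)
      linarith
    have hεb : B - R ≤ a ^ n / ((n:ℝ) * R^(n-1)) := by
      rw [le_div_iff₀ hden2]
      linarith
    have hδ0 : (0:ℝ) ≤ a ^ n / ((n:ℝ) * (R-a)^(n-1)) := by positivity
    have hε0 : (0:ℝ) ≤ a ^ n / ((n:ℝ) * R^(n-1)) := by positivity
    have hsq : (R - T) * (R - T) ≤ (a ^ n / ((n:ℝ) * (R-a)^(n-1))) * (a ^ n / ((n:ℝ) * (R-a)^(n-1))) :=
      mul_self_le_mul_self (sub_nonneg.2 hTR) hδb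
    have hδδ : (0:ℝ) ≤ (a ^ n / ((n:ℝ) * (R-a)^(n-1))) * (a ^ n / ((n:ℝ) * (R-a)^(n-1))) :=
      mul_nonneg hδ0 hδ0
    constructor
    · rw [hE]
      have hid : (R ^ 2 - T ^ 2)/2 + R * T - R ^ 2 = -((R - T) * (R - T))/2 := by ring
      linarith
    · rw [hE]
      have h3 : (R - T) * (B - R) ≤ (a ^ n / ((n:ℝ) * (R-a)^(n-1))) * (a ^ n / ((n:ℝ) * R^(n-1))) :=
        mul_le_mul hδb hεb (by linarith) hδ0
      have hid2 : (R - T) * B + R * T - R ^ 2 = (R - T) * (B - R) := by ring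
      linarith
  -- squeeze
  have hδ : Tendsto (fun R : ℝ => a^n / ((n:ℝ) * (R-a)^(n-1))) atTop (nhds 0) := by
    apply Tendsto.div_atTop (tendsto_const_nhds)
    apply Tendsto.const_mul_atTop hn0
    have h1 : Tendsto (fun R : ℝ => R - a) atTop atTop :=
      tendsto_atTop_add_const_right _ (-a) tendsto_id
    exact (tendsto_pow_atTop (by omega : n - 1 ≠ 0)).comp h1
  have hε : Tendsto (fun R : ℝ => a^n / ((n:ℝ) * R^(n-1))) atTop (nhds 0) := by
    apply Tendsto.div_atTop (tendsto_const_nhds)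
    apply Tendsto.const_mul_atTop hn0
    exact tendsto_pow_atTop (by omega : n - 1 ≠ 0)
  apply tendsto_of_tendsto_of_tendsto_of_le_of_le'
    (g := fun R : ℝ => -((a^n / ((n:ℝ) * (R-a)^(n-1))) * (a^n / ((n:ℝ) * (R-a)^(n-1)))))
    (h := fun R : ℝ => (a^n / ((n:ℝ) * (R-a)^(n-1))) * (a^n / ((n:ℝ) * R^(n-1))))
  · simpa using (hδ.mul hδ).neg
  · simpa using hδ.mul hε
  · filter_upwards [eventually_ge_atTop (a+1)] with R hR using (core R hR).1
  · filter_upwards [eventually_ge_atTop (a+1)] with R hR using (core R hR).2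


open Filter

/-- For `n ≥ 3` and `a > 0`, `W_a(x) + W_a^*(x) − ‖x‖² → 0` as `‖x‖ → ∞`. -/
theorem stmt_18 (n : ℕ) (hn : 3 ≤ n) (a : ℝ) (ha : 0 < a) :
    Tendsto
      (fun x : EuclideanSpace ℝ (Fin n) =>
        (∫ r in (0:ℝ)..‖x‖, (r ^ n + a ^ n) ^ ((1:ℝ)/n)) +
          (∫ r in (0:ℝ)..‖x‖, (max (r ^ n - a ^ n) 0) ^ ((1:ℝ)/n)) - ‖x‖ ^ 2)
      (Filter.comap (fun x : EuclideanSpace ℝ (Fin n) => ‖x‖) atTop)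
      (nhds 0) := by
  simp only [one_div]
  exact (key hn ha).comp tendsto_comap
end
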